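/- arXiv:2402.01058 — 2 statements merged into one kernel-verified Lean document; each statement's English description precedes it below -/
import Mathlib

section
/- Let g_1 : ℝ → [0,1] be defined by g_1(x) = 2x for x ∈ [0,1/2), g_1(x) = 2-2x for x ∈ [1/2,1], and g_1(x) = 0 otherwise, and define g_{k+1} = g_1 ∘ g_k. Define f_k : [0,1] → [0,1] by f_k(x) = ((2n+1)/2^k)·x − (n²+n)/2^{2k} for x ∈ [n/2^k, (n+1)/2^k) with n ∈ {0,1,...,2^k−1}, and f_k(1) = 1. Then for all k ∈ ℕ and x ∈ [0,1], f_k(x) = x − ∑_{j=1}^{k} 2^{−2j} g_j(x), and |x² − f_k(x)| ≤ 2^{−2k−2}. -/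
/-!
Put `t = 2 ^ k * x`. Then `f_k x = P t / 4 ^ k`, where `P` interpolates `t ↦ t ^ 2` linearly
between consecutive integers, and `g_k x = S t`, where `S` is the distance to the nearest even
integer, because `tent ∘ S = S ∘ (2 * ·)`. Writing `t = n + r` with `n = ⌊t⌋`, a direct computation
in the two cases `r < 1/2`, `r ≥ 1/2` gives `P (2 t) = 4 P t - S (2 t)`, which telescopes to the
sum formula, while `t ^ 2 - P t = r ^ 2 - r ∈ [-1/4, 0]` gives the error bound.
-/

open Finset

namespace Sawtooth

noncomputable def tent (x : ℝ) : ℝ :=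
  if x ∈ Set.Ico (0:ℝ) (1/2) then 2*x
  else if x ∈ Set.Icc (1/2 : ℝ) 1 then 2 - 2*x
  else 0

/-- Distance from `t` to the nearest even integer. -/
noncomputable def sawtooth (t : ℝ) : ℝ := if Even ⌊t⌋ then Int.fract t else 1 - Int.fract t

/-- The piecewise-linear interpolation of `t ↦ t ^ 2` at the integers. -/
noncomputable def sqInterp (t : ℝ) : ℝ := ⌊t⌋ ^ 2 + (2 * ⌊t⌋ + 1) * Int.fract t

section Floor

variable {R : Type*} [Field R] [LinearOrder R] [IsStrictOrderedRing R] [FloorRing R]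

lemma floor_two_mul_of_fract_lt_half {t : R} (h : Int.fract t < 1/2) : ⌊2 * t⌋ = 2 * ⌊t⌋ := by
  rw [Int.floor_eq_iff]
  have := Int.fract_nonneg t
  rw [Int.fract] at *
  push_cast
  constructor <;> linarith

lemma floor_two_mul_of_half_le_fract {t : R} (h : 1/2 ≤ Int.fract t) :
    ⌊2 * t⌋ = 2 * ⌊t⌋ + 1 := by
  rw [Int.floor_eq_iff]
  have := Int.fract_lt_one t
  rw [Int.fract] at *
  push_cast
  constructor <;> linarith

end Floor

lemma tent_one_sub {y : ℝ} (hy : y ∈ Set.Icc (0:ℝ) 1) : tent (1 - y) = tent y := by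
  simp only [tent, Set.mem_Ico, Set.mem_Icc] at hy ⊢
  split_ifs <;> grind

lemma tent_fract (t : ℝ) : tent (Int.fract t) = sawtooth (2 * t) := by
  have h0 := Int.fract_nonneg t
  have h1 := Int.fract_lt_one t
  unfold sawtooth
  rcases lt_or_ge (Int.fract t) (1/2) with h | h
  · have hfl := floor_two_mul_of_fract_lt_half h
    have hfract : Int.fract (2 * t) = 2 * Int.fract t := by
      rw [Int.fract, hfl, Int.fract]; push_cast; ring
    rw [tent, if_pos ⟨h0, h⟩, hfl, if_pos (even_two_mul _), hfract]
  · have hfl := floor_two_mul_of_half_le_fract h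
    have hfract : Int.fract (2 * t) = 2 * Int.fract t - 1 := by
      rw [Int.fract, hfl, Int.fract]; push_cast; ring
    rw [tent, if_neg (fun h' => by linarith [h'.2]), if_pos ⟨h, h1.le⟩, hfl,
      if_neg (by simp [parity_simps]), hfract]
    ring

lemma tent_sawtooth (t : ℝ) : tent (sawtooth t) = sawtooth (2 * t) := by
  rw [← tent_fract]
  unfold sawtooth
  split_ifs
  · rfl
  · exact tent_one_sub ⟨Int.fract_nonneg t, (Int.fract_lt_one t).le⟩

lemma sawtooth_of_mem_Icc {x : ℝ} (hx : x ∈ Set.Icc (0:ℝ) 1) : sawtooth x = x := by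
  rcases hx.2.lt_or_eq with h | rfl
  · have : ⌊x⌋ = 0 := Int.floor_eq_zero_iff.mpr ⟨hx.1, h⟩
    simp [sawtooth, Int.fract, this]
  · simp [sawtooth]

lemma tent_iterate {x : ℝ} (hx : x ∈ Set.Icc (0:ℝ) 1) (k : ℕ) :
    tent^[k] x = sawtooth (2 ^ k * x) := by
  induction k with
  | zero => simp [sawtooth_of_mem_Icc hx]
  | succ k ih => rw [Function.iterate_succ_apply', ih, tent_sawtooth, pow_succ']; ring_nf

lemma sq_sub_sqInterp (t : ℝ) : t ^ 2 - sqInterp t = Int.fract t ^ 2 - Int.fract t := by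
  rw [sqInterp, Int.fract]; ring

lemma abs_sq_sub_sqInterp_le (t : ℝ) : |t ^ 2 - sqInterp t| ≤ 1/4 := by
  have h0 := Int.fract_nonneg t
  have h1 := Int.fract_lt_one t
  rw [sq_sub_sqInterp, abs_le]
  constructor <;> nlinarith [sq_nonneg (Int.fract t - 1/2)]

lemma sqInterp_natCast (n : ℕ) : sqInterp n = n ^ 2 := by
  simp [sqInterp]

lemma sqInterp_of_mem_Icc {x : ℝ} (hx : x ∈ Set.Icc (0:ℝ) 1) : sqInterp x = x := by
  rcases hx.2.lt_or_eq with h | rfl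
  · have : ⌊x⌋ = 0 := Int.floor_eq_zero_iff.mpr ⟨hx.1, h⟩
    simp [sqInterp, Int.fract, this]
  · simpa using sqInterp_natCast 1

lemma sqInterp_two_mul (t : ℝ) : sqInterp (2 * t) = 4 * sqInterp t - sawtooth (2 * t) := by
  rw [← tent_fract]
  unfold sqInterp
  rcases lt_or_ge (Int.fract t) (1/2) with h | h
  · rw [tent, if_pos ⟨Int.fract_nonneg t, h⟩, Int.fract, Int.fract, floor_two_mul_of_fract_lt_half h]
    push_cast; ring
  · rw [tent, if_neg (fun h' => by linarith [h'.2]), if_pos ⟨h, (Int.fract_lt_one t).le⟩,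
      Int.fract, Int.fract, floor_two_mul_of_half_le_fract h]
    push_cast; ring

lemma sqInterp_two_pow_mul_div (t : ℝ) (k : ℕ) :
    sqInterp (2 ^ k * t) / 4 ^ k = sqInterp t - ∑ j ∈ Icc 1 k, sawtooth (2 ^ j * t) / 4 ^ j := by
  induction k with
  | zero => simp
  | succ k ih =>
    rw [sum_Icc_succ_top (by omega), ← sub_sub, ← ih, pow_succ', mul_assoc, sqInterp_two_mul,
      pow_succ']
    field_simp

lemma apply_eq_sqInterp_two_pow_mul_div {f : ℝ → ℝ} {k : ℕ}
    (hf : ∀ n : ℕ, n < 2 ^ k → ∀ x ∈ Set.Ico ((n : ℝ) / 2 ^ k) (((n : ℝ) + 1) / 2 ^ k),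
      f x = ((2 * (n : ℝ) + 1) / 2 ^ k) * x - ((n : ℝ) ^ 2 + n) / 2 ^ (2 * k))
    (hf1 : f 1 = 1) {x : ℝ} (hx : x ∈ Set.Icc (0:ℝ) 1) :
    f x = sqInterp (2 ^ k * x) / 4 ^ k := by
  have hpos : (0:ℝ) < 2 ^ k := by positivity
  have h4 : (4:ℝ) ^ k = 2 ^ (2 * k) := by rw [pow_mul]; norm_num
  rcases hx.2.lt_or_eq with h | rfl
  · have ht : 0 ≤ 2 ^ k * x := mul_nonneg hpos.le hx.1
    set n := ⌊2 ^ k * x⌋₊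
    have hn : ⌊2 ^ k * x⌋ = n := (Int.natCast_floor_eq_floor ht).symm
    have hnlt : n < 2 ^ k := by
      rw [Nat.floor_lt ht]; push_cast; nlinarith
    have hmem : x ∈ Set.Ico ((n : ℝ) / 2 ^ k) (((n : ℝ) + 1) / 2 ^ k) := by
      rw [Set.mem_Ico, div_le_iff₀ hpos, lt_div_iff₀ hpos, mul_comm x]
      exact ⟨Nat.floor_le ht, Nat.lt_floor_add_one _⟩
    rw [hf n hnlt x hmem, sqInterp, Int.fract, hn, h4]
    field_simp
    push_cast
    ring
  · rw [hf1, mul_one, ← Nat.cast_ofNat, ← Nat.cast_pow, sqInterp_natCast, Nat.cast_pow,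
      Nat.cast_ofNat, h4, ← pow_mul, mul_comm, div_self (by positivity)]

lemma two_zpow_neg_two_mul (j : ℕ) : (2:ℝ) ^ (-(2 * (j:ℤ))) = 1 / 4 ^ j := by
  rw [zpow_neg, zpow_mul, one_div]; norm_num

end Sawtooth

open Sawtooth in
theorem stmt_0 (g f : ℕ → ℝ → ℝ)
    (hg₁ : ∀ x : ℝ, g 1 x =
      if x ∈ Set.Ico (0:ℝ) (1/2) then 2*x
      else if x ∈ Set.Icc (1/2 : ℝ) 1 then 2 - 2*x
      else 0)
    (hg : ∀ k : ℕ, 1 ≤ k → ∀ x : ℝ, g (k+1) x = g 1 (g k x))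
    (hf : ∀ k n : ℕ, n < 2^k →
      ∀ x ∈ Set.Ico ((n : ℝ)/2^k) (((n : ℝ)+1)/2^k),
        f k x = ((2*(n:ℝ)+1)/2^k) * x - ((n:ℝ)^2 + n)/2^(2*k))
    (hf1 : ∀ k : ℕ, f k 1 = 1) :
    ∀ k : ℕ, ∀ x ∈ Set.Icc (0:ℝ) 1,
      f k x = x - ∑ j ∈ Finset.Icc 1 k, (2:ℝ)^(-(2*(j:ℤ))) * g j x ∧
      |x^2 - f k x| ≤ (2:ℝ)^(-(2*(k:ℤ)) - 2) := by
  have hg_tent : ∀ j, 1 ≤ j → ∀ x, g j x = tent^[j] x := by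
    intro j hj
    induction j, hj using Nat.le_induction with
    | base => exact hg₁
    | succ j hj ih =>
      intro x
      rw [hg j hj, ih, hg₁, Function.iterate_succ_apply']
      rfl
  intro k x hx
  have hfx := apply_eq_sqInterp_two_pow_mul_div (hf k) (hf1 k) hx
  refine ⟨?_, ?_⟩
  · rw [hfx, sqInterp_two_pow_mul_div, sqInterp_of_mem_Icc hx]
    refine congrArg _ (sum_congr rfl fun j hj => ?_)
    rw [hg_tent j (mem_Icc.mp hj).1, tent_iterate hx, two_zpow_neg_two_mul, one_div_mul_eq_div]
  · have h4 : ((2:ℝ) ^ k) ^ 2 = 4 ^ k := by rw [← pow_mul, mul_comm, pow_mul]; norm_num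
    have h4pos : (0:ℝ) < 4 ^ k := by positivity
    calc |x ^ 2 - f k x| = |((2 ^ k * x) ^ 2 - sqInterp (2 ^ k * x)) / 4 ^ k| := by
          rw [hfx, mul_pow, h4, sub_div, mul_div_cancel_left₀ _ h4pos.ne']
      _ ≤ 1 / 4 / 4 ^ k := by
          rw [abs_div, abs_of_pos h4pos]; gcongr; exact abs_sq_sub_sqInterp_le _
      _ = (2:ℝ) ^ (-(2 * (k:ℤ)) - 2) := by
          rw [zpow_sub₀ two_ne_zero, two_zpow_neg_two_mul]; ring
end

section
/- Let (E,d) be a metric space, L ∈ [0,∞), D ⊆ E, ∅ ≠ C ⊆ D, and let f : D → ℝ satisfy |f(x) − f(y)| ≤ L·d(x,y) for all x ∈ D, y ∈ C. Define F(x) = sup_{y ∈ C} (f(y) − L·d(x,y)). Then for all x ∈ D, |F(x) − f(x)| ≤ 2L·inf_{y ∈ C} d(x,y). -/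
/-! The Lipschitz bound between `x` and a sample `y` gives `f y - L d(x,y) ≤ f x`, hence `F x ≤ f x`,
and also `f y - L d(x,y) ≥ f x - 2 L d(x,y)`, hence `F x ≥ f x - 2 L d(x,y)` for every `y ∈ C`. -/

section MaxConvolution

variable {E : Type*} [PseudoMetricSpace E] {L : ℝ} {C : Set E} {f : E → ℝ} {x : E}

lemma iSup_sub_mul_dist_le [Nonempty C] (hfx : ∀ y ∈ C, |f x - f y| ≤ L * dist x y) :
    ⨆ y : C, (f y - L * dist x (y : E)) ≤ f x :=
  ciSup_le fun y => by linarith [(abs_le.1 (hfx y y.2)).1]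

lemma sub_two_mul_mul_dist_le_iSup (hfx : ∀ y ∈ C, |f x - f y| ≤ L * dist x y) (y : C) :
    f x - 2 * L * dist x (y : E) ≤ ⨆ z : C, (f z - L * dist x (z : E)) := by
  have hbdd : BddAbove (Set.range fun z : C => f z - L * dist x (z : E)) :=
    ⟨f x, Set.forall_mem_range.2 fun z => by linarith [(abs_le.1 (hfx z z.2)).1]⟩
  have hy : f y - L * dist x (y : E) ≤ ⨆ z : C, (f z - L * dist x (z : E)) := le_ciSup hbdd y
  linarith [(abs_le.1 (hfx y y.2)).2]

lemma abs_iSup_sub_mul_dist_sub_le [Nonempty C] (hL : 0 ≤ L)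
    (hfx : ∀ y ∈ C, |f x - f y| ≤ L * dist x y) :
    |(⨆ y : C, (f y - L * dist x (y : E))) - f x| ≤ 2 * L * ⨅ y : C, dist x (y : E) := by
  rw [abs_of_nonpos (sub_nonpos.2 (iSup_sub_mul_dist_le hfx)), neg_sub,
    Real.mul_iInf_of_nonneg (by positivity)]
  exact le_ciInf fun y => by linarith [sub_two_mul_mul_dist_le_iSup hfx y]

end MaxConvolution

theorem stmt_14_general {E : Type*} [MetricSpace E] (L : ℝ) (hL : 0 ≤ L)
    (D C : Set E) (hC : C.Nonempty)
    (f : E → ℝ)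
    (hf : ∀ x ∈ D, ∀ y ∈ C, |f x - f y| ≤ L * dist x y)
    (F : E → ℝ)
    (hF : ∀ x : E, F x = ⨆ y : C, (f y - L * dist x (y : E))) :
    ∀ x ∈ D, |F x - f x| ≤ 2 * L * ⨅ y : C, dist x (y : E) := by
  intro x hx
  have : Nonempty C := hC.to_subtype
  rw [hF x]
  exact abs_iSup_sub_mul_dist_sub_le hL (hf x hx)

theorem stmt_14 {E : Type*} [MetricSpace E] (L : ℝ) (hL : 0 ≤ L)
    (D C : Set E) (hC : C.Nonempty) (hCD : C ⊆ D)
    (f : E → ℝ)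
    (hf : ∀ x ∈ D, ∀ y ∈ C, |f x - f y| ≤ L * dist x y)
    (F : E → ℝ)
    (hF : ∀ x : E, F x = ⨆ y : C, (f y - L * dist x (y : E))) :
    ∀ x ∈ D, |F x - f x| ≤ 2 * L * ⨅ y : C, dist x (y : E) :=
  stmt_14_general L hL D C hC f hf F hF
end
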